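/- Let p ∈ ℝ⁴, and define g(z) := p·Q(z) (real-valued) and h(z) := (p¹ − i p²) − (p⁰ + p³)(x − iy) (so h = ∂_z g). On the open set {z ∈ ℂ : g(z) ≠ 0}, the function F := h²/g satisfies ∂_z̄² F = 2 B(p,p)² / g³, i.e. ∂ₓₓF − ∂_yyF + 2i ∂ₓ∂_yF = 8 B(p,p)² / g³. (For B(p,p) = −m² this is the pointwise identity ∂_z̄²((∂_z q·p)²/(2 q·p)) = m⁴/(q·p)³ underlying the relation between massive hard supermomenta and the Weinberg soft factor.) -/

import Mathlib

noncomputable section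

/-- The null embedding of the celestial sphere into the light-cone of Minkowski space. -/
def Q (z : ℂ) : Fin 4 → ℝ :=
  ![-1 - z.re ^ 2 - z.im ^ 2, 2 * z.re, 2 * z.im, 1 - z.re ^ 2 - z.im ^ 2]

/-- The contraction `p·Q(z) = Σ_μ pᵘ Qᵘ(z)`. -/
def dotQ (p : Fin 4 → ℝ) (z : ℂ) : ℝ := ∑ μ : Fin 4, p μ * Q z μ

/-- The Minkowski bilinear form on `ℝ⁴`. -/
def mink (u v : Fin 4 → ℝ) : ℝ :=
  -(u 0 * v 0) + u 1 * v 1 + u 2 * v 2 + u 3 * v 3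

/-- The partial derivative `∂ₓ` of a complex-valued function on `ℂ ≅ ℝ²`. -/
def pdx (f : ℂ → ℂ) (z : ℂ) : ℂ := fderiv ℝ f z 1

/-- The partial derivative `∂_y` of a complex-valued function on `ℂ ≅ ℝ²`. -/
def pdy (f : ℂ → ℂ) (z : ℂ) : ℂ := fderiv ℝ f z Complex.I

/-- The Wirtinger derivative `∂_z̄ = ½(∂ₓ + i ∂_y)`. -/
def pzbar (f : ℂ → ℂ) (z : ℂ) : ℂ := (1 / 2) * (pdx f z + Complex.I * pdy f z)

/-- `h(z) = ∂_z(p·Q)(z) = (p¹ − i p²) − (p⁰ + p³)(x − iy)`. -/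
def hfun (p : Fin 4 → ℝ) (z : ℂ) : ℂ :=
  ((p 1 : ℂ) - (p 2 : ℂ) * Complex.I) - ((p 0 : ℂ) + (p 3 : ℂ)) * (starRingEnd ℂ z)

def wl (d1 d2 : ℂ) : ℂ →L[ℝ] ℂ :=
  d1 • (ContinuousLinearMap.id ℝ ℂ) + d2 • (Complex.conjCLE.toContinuousLinearMap)

@[simp] lemma wl_apply (d1 d2 v : ℂ) : wl d1 d2 v = d1 * v + d2 * (starRingEnd ℂ v) := by
  simp [wl, Complex.conjCLE_apply, smul_eq_mul]

def HW (f : ℂ → ℂ) (z d1 d2 : ℂ) : Prop := HasFDerivAt f (wl d1 d2) z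

theorem HW.pzbar_eq {f : ℂ → ℂ} {z d1 d2 : ℂ} (h : HW f z d1 d2) : pzbar f z = d2 := by
  have hf := h.fderiv
  simp only [pzbar, pdx, pdy, hf, wl_apply, map_one, Complex.conj_I]
  ring_nf
  simp [Complex.I_sq]
  ring

theorem HW.congr_d {f : ℂ → ℂ} {z d1 d2 e1 e2 : ℂ} (h : HW f z d1 d2)
    (h1 : d1 = e1) (h2 : d2 = e2) : HW f z e1 e2 := h1 ▸ h2 ▸ h

theorem HW.const (z c : ℂ) : HW (fun _ => c) z 0 0 := by
  have : wl 0 0 = 0 := by ext v; simp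
  unfold HW; rw [this]; exact hasFDerivAt_const c z

theorem HW.id (z : ℂ) : HW (fun w => w) z 1 0 := by
  have : wl 1 0 = ContinuousLinearMap.id ℝ ℂ := by ext v; simp
  unfold HW; rw [this]; exact hasFDerivAt_id z

theorem HW.conj (z : ℂ) : HW (fun w => starRingEnd ℂ w) z 0 1 := by
  have : wl 0 1 = Complex.conjCLE.toContinuousLinearMap := by ext v; simp
  unfold HW; rw [this]
  exact Complex.conjCLE.toContinuousLinearMap.hasFDerivAt

theorem HW.add {f g : ℂ → ℂ} {z a1 a2 b1 b2 : ℂ} (hf : HW f z a1 a2) (hg : HW g z b1 b2) :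
    HW (fun w => f w + g w) z (a1 + b1) (a2 + b2) := by
  have : wl (a1 + b1) (a2 + b2) = wl a1 a2 + wl b1 b2 := by ext v; simp; ring
  unfold HW at *; rw [this]; exact hf.add hg

theorem HW.sub {f g : ℂ → ℂ} {z a1 a2 b1 b2 : ℂ} (hf : HW f z a1 a2) (hg : HW g z b1 b2) :
    HW (fun w => f w - g w) z (a1 - b1) (a2 - b2) := by
  have : wl (a1 - b1) (a2 - b2) = wl a1 a2 - wl b1 b2 := by ext v; simp; ring
  unfold HW at *; rw [this]; exact hf.sub hg

theorem HW.mul {f g : ℂ → ℂ} {z a1 a2 b1 b2 : ℂ} (hf : HW f z a1 a2) (hg : HW g z b1 b2) :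
    HW (fun w => f w * g w) z (f z * b1 + g z * a1) (f z * b2 + g z * a2) := by
  have : wl (f z * b1 + g z * a1) (f z * b2 + g z * a2)
      = f z • wl b1 b2 + g z • wl a1 a2 := by ext v; simp; ring
  unfold HW at *; rw [this]; exact hf.mul hg

theorem HW.inv {g : ℂ → ℂ} {z b1 b2 : ℂ} (hg : HW g z b1 b2) (h0 : g z ≠ 0) :
    HW (fun w => (g w)⁻¹) z (-b1 / (g z) ^ 2) (-b2 / (g z) ^ 2) := by
  have hinv : HasFDerivAt (fun x : ℂ => x⁻¹)
      ((ContinuousLinearMap.smulRight (1 : ℂ →L[ℂ] ℂ) (-((g z) ^ 2)⁻¹)).restrictScalars ℝ)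
      (g z) := ((hasDerivAt_inv h0).hasFDerivAt).restrictScalars ℝ
  have hcomp := hinv.comp z hg
  have : ((ContinuousLinearMap.smulRight (1 : ℂ →L[ℂ] ℂ) (-((g z) ^ 2)⁻¹)).restrictScalars ℝ).comp
      (wl b1 b2) = wl (-b1 / (g z) ^ 2) (-b2 / (g z) ^ 2) := by
    ext v
    simp [ContinuousLinearMap.smulRight_apply, smul_eq_mul]
    ring
  unfold HW; rw [← this]; exact hcomp

theorem HW.div {f g : ℂ → ℂ} {z a1 a2 b1 b2 : ℂ} (hf : HW f z a1 a2) (hg : HW g z b1 b2)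
    (h0 : g z ≠ 0) :
    HW (fun w => f w / g w) z ((a1 * g z - f z * b1) / (g z) ^ 2)
      ((a2 * g z - f z * b2) / (g z) ^ 2) := by
  have h1 : (fun w => f w / g w) = fun w => f w * (g w)⁻¹ := by
    funext w; rw [div_eq_mul_inv]
  rw [h1]
  exact (hf.mul (hg.inv h0)).congr_d (by field_simp; ring) (by field_simp; ring)

def Gf (p : Fin 4 → ℝ) : ℂ → ℂ := fun w => ((dotQ p w : ℝ) : ℂ)

lemma Gf_eq (p : Fin 4 → ℝ) (w : ℂ) : Gf p w =
    -((p 0 : ℂ) - (p 3 : ℂ)) + ((p 1 : ℂ) - (p 2 : ℂ) * Complex.I) * w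
      + ((p 1 : ℂ) + (p 2 : ℂ) * Complex.I) * (starRingEnd ℂ w)
      - ((p 0 : ℂ) + (p 3 : ℂ)) * (w * starRingEnd ℂ w) := by
  simp [Gf, dotQ, Q, Fin.sum_univ_four, Complex.ext_iff, ← Complex.ofReal_pow]
  constructor <;> ring

lemma hw_Gf (p : Fin 4 → ℝ) (z : ℂ) :
    HW (Gf p) z (hfun p z) (starRingEnd ℂ (hfun p z)) := by
  have hfe : Gf p = fun w =>
      -((p 0 : ℂ) - (p 3 : ℂ)) + ((p 1 : ℂ) - (p 2 : ℂ) * Complex.I) * w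
        + ((p 1 : ℂ) + (p 2 : ℂ) * Complex.I) * (starRingEnd ℂ w)
        - ((p 0 : ℂ) + (p 3 : ℂ)) * (w * starRingEnd ℂ w) := funext (Gf_eq p)
  rw [hfe]
  have t1 := (HW.const z (-((p 0 : ℂ) - (p 3 : ℂ)))).add
      ((HW.const z ((p 1 : ℂ) - (p 2 : ℂ) * Complex.I)).mul (HW.id z))
  have t2 := t1.add ((HW.const z ((p 1 : ℂ) + (p 2 : ℂ) * Complex.I)).mul (HW.conj z))
  have t3 := t2.sub ((HW.const z ((p 0 : ℂ) + (p 3 : ℂ))).mul ((HW.id z).mul (HW.conj z)))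
  refine t3.congr_d ?_ ?_
  · simp only [hfun]
    ring
  · simp only [hfun, map_sub, map_add, map_mul, Complex.conj_ofReal, Complex.conj_I,
      Complex.conj_conj]
    ring

lemma hw_h (p : Fin 4 → ℝ) (z : ℂ) :
    HW (hfun p) z 0 (-((p 0 : ℂ) + (p 3 : ℂ))) := by
  have hfe : hfun p = fun w => ((p 1 : ℂ) - (p 2 : ℂ) * Complex.I)
      - ((p 0 : ℂ) + (p 3 : ℂ)) * (starRingEnd ℂ w) := rfl
  rw [hfe]
  refine ((HW.const z ((p 1 : ℂ) - (p 2 : ℂ) * Complex.I)).sub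
      ((HW.const z ((p 0 : ℂ) + (p 3 : ℂ))).mul (HW.conj z))).congr_d (by ring) (by ring)

lemma key (p : Fin 4 → ℝ) (z : ℂ) :
    hfun p z * starRingEnd ℂ (hfun p z)
      = ((mink p p : ℝ) : ℂ) - ((p 0 : ℂ) + (p 3 : ℂ)) * Gf p z := by
  simp [hfun, Gf, dotQ, Q, mink, Fin.sum_univ_four, Complex.ext_iff, ← Complex.ofReal_pow]
  constructor <;> ring

lemma Gf_cont (p : Fin 4 → ℝ) : Continuous (Gf p) := by
  rw [funext (Gf_eq p)]
  exact ((continuous_const.add (continuous_const.mul continuous_id)).add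
      (continuous_const.mul continuous_star)).sub
      (continuous_const.mul (continuous_id.mul continuous_star))

theorem pzbar_congr {f g : ℂ → ℂ} {z : ℂ} (h : f =ᶠ[nhds z] g) : pzbar f z = pzbar g z := by
  unfold pzbar pdx pdy
  rw [h.fderiv_eq]

/-- On the open set where `g := p·Q ≠ 0`, the function `F = h²/g` satisfies
`∂_z̄² F = 2 B(p,p)² / g³` (the pointwise identity underlying the relation between
massive hard supermomenta and the Weinberg soft factor). -/
theorem dbar_sq_weinberg (p : Fin 4 → ℝ) (z : ℂ) (hz : dotQ p z ≠ 0) :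
    pzbar (pzbar (fun w => (hfun p w) ^ 2 / ((dotQ p w : ℝ) : ℂ))) z
      = 2 * ((mink p p : ℝ) : ℂ) ^ 2 / ((dotQ p z : ℝ) : ℂ) ^ 3 := by
  have hGf : ((dotQ p z : ℝ) : ℂ) = Gf p z := rfl
  rw [hGf]
  set a : ℂ := (p 0 : ℂ) + (p 3 : ℂ) with ha
  set m : ℂ := ((mink p p : ℝ) : ℂ) with hm
  have hGz : Gf p z ≠ 0 := by
    simpa [Gf] using Complex.ofReal_ne_zero.mpr hz
  set φ : ℂ → ℂ :=
    fun w => (-a) * (hfun p w / Gf p w) - m * (hfun p w / (Gf p w * Gf p w)) with hφ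
  have step1 : ∀ w ∈ Gf p ⁻¹' {(0 : ℂ)}ᶜ,
      pzbar (fun w => (hfun p w) ^ 2 / ((dotQ p w : ℝ) : ℂ)) w = φ w := by
    intro w hw
    replace hw : Gf p w ≠ 0 := hw
    have hF : (fun w => (hfun p w) ^ 2 / ((dotQ p w : ℝ) : ℂ))
        = fun w => (hfun p w * hfun p w) / Gf p w := by
      funext u; rw [sq]; rfl
    rw [hF]
    have hdiv := ((hw_h p w).mul (hw_h p w)).div (hw_Gf p w) hw
    rw [hdiv.pzbar_eq, hφ]
    have hk := key p w
    rw [← hm] at hk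
    field_simp
    ring_nf
    linear_combination (-(hfun p w)) * hk
  have hopen : IsOpen (Gf p ⁻¹' {(0 : ℂ)}ᶜ) :=
    IsOpen.preimage (Gf_cont p) isOpen_compl_singleton
  have hev : (pzbar (fun w => (hfun p w) ^ 2 / ((dotQ p w : ℝ) : ℂ))) =ᶠ[nhds z] φ :=
    Filter.eventually_of_mem (hopen.mem_nhds hGz) step1
  rw [pzbar_congr hev]
  have hGG : Gf p z * Gf p z ≠ 0 := mul_ne_zero hGz hGz
  have t1 := (HW.const z (-a)).mul ((hw_h p z).div (hw_Gf p z) hGz)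
  have t2 := (HW.const z m).mul
      ((hw_h p z).div ((hw_Gf p z).mul (hw_Gf p z)) hGG)
  have t3 := t1.sub t2
  rw [t3.pzbar_eq]
  have hk := key p z
  rw [← hm] at hk
  field_simp
  ring_nf
  linear_combination (((p 0 : ℂ) + (p 3 : ℂ)) * Gf p z + 2 * m) * hk
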